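/- Let B be a set of n-1 index pairs (i,j) with 1 ≤ i < j ≤ n. Then B generates (uniquely determines) every consistent n×n pairwise comparison matrix from its values on B if and only if the associated graph G_B on {1,...,n} is a tree. -/

import Mathlib

/-!
If `G_B` is connected, any two consistent matrices agreeing on `B` agree on every edge of `G_B` in
both orientations (as `m_ji = m_ij⁻¹`), hence along every walk, since consistency makes an entry
the product of the entries along a walk between its indices. If `G_B` is disconnected, the ratio
matrix `f i / f j` with `f = 2` on one component and `f = 1` elsewhere agrees with the all-ones
matrix on `B` but not everywhere. Finally a connected graph with `n` vertices and at most `n - 1` edges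
is a tree.
-/

open SimpleGraph

/-- The graph on `Fin n` associated to a set `B` of index pairs. -/
def genGraph (n : ℕ) (B : Finset (Fin n × Fin n)) : SimpleGraph (Fin n) :=
  SimpleGraph.fromEdgeSet ((fun p : Fin n × Fin n => s(p.1, p.2)) '' (B : Set (Fin n × Fin n)))

variable {ι α : Type*}

namespace Matrix

def IsConsistent [Mul α] (M : Matrix ι ι α) : Prop :=
  ∀ i j k, M i j * M j k = M i k

def ratio [Div α] (f : ι → α) : Matrix ι ι α :=
  of fun i j => f i / f j

theorem isConsistent_ratio [GroupWithZero α] {f : ι → α} (hf : ∀ i, f i ≠ 0) :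
    (ratio f).IsConsistent :=
  fun _ j _ => div_mul_div_cancel₀ (hf j)

namespace IsConsistent

variable {M M' : Matrix ι ι α}

theorem apply_self [GroupWithZero α] (hM : M.IsConsistent) {i : ι} (h : M i i ≠ 0) :
    M i i = 1 :=
  mul_left_cancel₀ h ((hM i i i).trans (mul_one _).symm)

theorem apply_swap [GroupWithZero α] (hM : M.IsConsistent) {i j : ι} (h : M j j ≠ 0) :
    M i j = (M j i)⁻¹ :=
  eq_inv_of_mul_eq_one_right ((hM j i j).trans (hM.apply_self h))

theorem apply_eq_of_reachable [Mul α] (hM : M.IsConsistent) (hM' : M'.IsConsistent)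
    {G : SimpleGraph ι} (hdiag : ∀ i, M i i = M' i i)
    (hadj : ∀ a b, G.Adj a b → M a b = M' a b) {i j : ι} (h : G.Reachable i j) :
    M i j = M' i j := by
  obtain ⟨p⟩ := h
  induction p with
  | nil => exact hdiag _
  | @cons a b c hab _ ih => rw [← hM a b c, ← hM' a b c, hadj a b hab, ih]

end IsConsistent

end Matrix

open Matrix

def Generates (B : Finset (ι × ι)) : Prop :=
  ∀ M M' : Matrix ι ι ℝ,
    (∀ i j, 0 < M i j) → M.IsConsistent → (∀ i j, 0 < M' i j) → M'.IsConsistent →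
    (∀ p ∈ B, M p.1 p.2 = M' p.1 p.2) → M = M'

section genGraph

variable {n : ℕ} {B : Finset (Fin n × Fin n)}

theorem genGraph_adj {a b : Fin n} :
    (genGraph n B).Adj a b ↔ a ≠ b ∧ ((a, b) ∈ B ∨ (b, a) ∈ B) := by
  simp only [genGraph, fromEdgeSet_adj, Set.mem_image, Finset.mem_coe, Sym2.eq_iff, ne_eq]
  refine and_comm.trans (and_congr_right fun _ => ⟨?_, ?_⟩)
  · rintro ⟨p, hp, ⟨rfl, rfl⟩ | ⟨rfl, rfl⟩⟩
    exacts [Or.inl hp, Or.inr hp]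
  · rintro (hab | hba)
    exacts [⟨_, hab, Or.inl ⟨rfl, rfl⟩⟩, ⟨_, hba, Or.inr ⟨rfl, rfl⟩⟩]

theorem genGraph_reachable_of_mem {p : Fin n × Fin n} (hp : p ∈ B) :
    (genGraph n B).Reachable p.1 p.2 := by
  by_cases h : p.1 = p.2
  · exact h ▸ Reachable.refl _
  · exact (genGraph_adj.2 ⟨h, Or.inl hp⟩).reachable

theorem card_edgeSet_genGraph_le : Nat.card (genGraph n B).edgeSet ≤ B.card := by
  rw [Nat.card_coe_set_eq, ← Set.ncard_coe_finset]
  calc (genGraph n B).edgeSet.ncard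
      ≤ ((fun p : Fin n × Fin n => s(p.1, p.2)) '' (B : Set (Fin n × Fin n))).ncard :=
        Set.ncard_le_ncard (by rw [genGraph, edgeSet_fromEdgeSet]; exact Set.sdiff_subset)
    _ ≤ (B : Set (Fin n × Fin n)).ncard := Set.ncard_image_le

theorem generates_of_preconnected (h : (genGraph n B).Preconnected) : Generates B := by
  intro M M' hM hMc hM' hM'c hB
  have hdiag : ∀ i, M i i = M' i i := fun i => by
    rw [hMc.apply_self (hM i i).ne', hM'c.apply_self (hM' i i).ne']
  have hadj : ∀ a b, (genGraph n B).Adj a b → M a b = M' a b := by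
    intro a b hab
    rcases (genGraph_adj.1 hab).2 with hab | hba
    · exact hB _ hab
    · rw [hMc.apply_swap (i := a) (hM b b).ne', hM'c.apply_swap (i := a) (hM' b b).ne', hB _ hba]
  ext i j
  exact hMc.apply_eq_of_reachable hM'c hdiag hadj (h i j)

theorem preconnected_of_generates (h : Generates B) : (genGraph n B).Preconnected := by
  classical
  intro u v
  by_contra huv
  let f : Fin n → ℝ := fun x => if (genGraph n B).Reachable u x then 2 else 1
  have hf : ∀ x, 0 < f x := fun x => by dsimp only [f]; split_ifs <;> norm_num
  have hfB : ∀ p ∈ B, f p.1 = f p.2 := by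
    intro p hp
    have hr := genGraph_reachable_of_mem hp
    have : (genGraph n B).Reachable u p.1 ↔ (genGraph n B).Reachable u p.2 :=
      ⟨fun h => h.trans hr, fun h => h.trans hr.symm⟩
    simp only [f, this]
  have hratio := h (ratio fun _ => 1) (ratio f) (fun _ _ => by simp [ratio])
    (isConsistent_ratio fun _ => one_ne_zero) (fun i j => div_pos (hf i) (hf j))
    (isConsistent_ratio fun x => (hf x).ne')
    (fun p hp => by simp [ratio, hfB p hp, (hf p.2).ne'])
  have := congrFun₂ hratio u v
  norm_num [ratio, f, huv] at this

end genGraph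

theorem generates_iff_tree_general (n : ℕ) (hn : 1 ≤ n)
    (B : Finset (Fin n × Fin n))
    (hcard : B.card = n - 1) :
    (∀ M M' : Matrix (Fin n) (Fin n) ℝ,
        (∀ i j, 0 < M i j) → (∀ i j k, M i j * M j k = M i k) →
        (∀ i j, 0 < M' i j) → (∀ i j k, M' i j * M' j k = M' i k) →
        (∀ p ∈ B, M p.1 p.2 = M' p.1 p.2) → M = M')
      ↔ (genGraph n B).IsTree := by
  change Generates B ↔ _
  have : Nonempty (Fin n) := ⟨⟨0, hn⟩⟩
  refine ⟨fun h => ?_, fun h => generates_of_preconnected h.connected.preconnected⟩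
  have hconn : (genGraph n B).Connected := ⟨preconnected_of_generates h⟩
  have hlower := hconn.card_vert_le_card_edgeSet_add_one
  have hupper := card_edgeSet_genGraph_le (B := B)
  rw [Nat.card_fin] at hlower
  exact isTree_iff_connected_and_card.2 ⟨hconn, by rw [Nat.card_fin]; omega⟩

/-- An `(n-1)`-set `B` of index pairs generates (uniquely determines) every
consistent PC matrix from its values on `B` iff the associated graph is a
tree. -/
theorem generates_iff_tree (n : ℕ) (hn : 1 ≤ n)
    (B : Finset (Fin n × Fin n)) (hB : ∀ p ∈ B, p.1 < p.2)
    (hcard : B.card = n - 1) :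
    (∀ M M' : Matrix (Fin n) (Fin n) ℝ,
        (∀ i j, 0 < M i j) → (∀ i j k, M i j * M j k = M i k) →
        (∀ i j, 0 < M' i j) → (∀ i j k, M' i j * M' j k = M' i k) →
        (∀ p ∈ B, M p.1 p.2 = M' p.1 p.2) → M = M')
      ↔ (genGraph n B).IsTree :=
  generates_iff_tree_general n hn B hcard
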